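/- arXiv:1103.5096 — 4 statements merged into one kernel-verified Lean document; each statement's English description precedes it below -/
import Mathlib

section
/- If p is a positive definite matrix that is similar to a unitary matrix (i.e., p = h u h⁻¹ for some invertible h and unitary u), then p is the identity matrix. -/
open scoped Matrix ComplexOrder

open scoped Matrix.Norms.L2Operator in
/-- A positive definite matrix similar to a unitary matrix is the identity. -/
theorem posDef_similar_to_unitary_eq_one {d : ℕ}
    (p : Matrix (Fin d) (Fin d) ℂ) (hp : p.PosDef)
    (h : Matrix (Fin d) (Fin d) ℂ) (hh : IsUnit h)
    (u : Matrix (Fin d) (Fin d) ℂ) (hu : u ∈ Matrix.unitaryGroup (Fin d) ℂ)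
    (heq : p = h * u * h⁻¹) :
    p = 1 := by
  have hherm := hp.1
  have hspec : spectrum ℂ p = spectrum ℂ u := by
    have h1 : (hh.unit : Matrix (Fin d) (Fin d) ℂ) = h := rfl
    rw [heq, ← h1, ← Matrix.coe_units_inv]
    exact spectrum.units_conjugate
  have key : ∀ i, hherm.eigenvalues i = 1 := by
    intro i
    have hmem : ((hherm.eigenvalues i : ℝ) : ℂ) ∈ spectrum ℂ u := by
      rw [← hspec]
      exact spectrum.algebraMap_mem ℂ (hherm.eigenvalues_mem_spectrum_real i)
    have hnorm : ‖((hherm.eigenvalues i : ℝ) : ℂ)‖ = 1 := by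
      have := spectrum.subset_circle_of_unitary hu hmem
      simpa [mem_sphere_iff_norm] using this
    have hpos : 0 < hherm.eigenvalues i := hp.eigenvalues_pos i
    have : |hherm.eigenvalues i| = 1 := by
      simpa [Complex.norm_real] using hnorm
    rwa [abs_of_pos hpos] at this
  have := hherm.spectral_theorem
  rw [this]
  have hfun : (RCLike.ofReal ∘ hherm.eigenvalues : Fin d → ℂ) = fun _ => 1 :=
    funext fun i => by simp [key i]
  have hdiag : Matrix.diagonal (RCLike.ofReal ∘ hherm.eigenvalues)
      = (1 : Matrix (Fin d) (Fin d) ℂ) := by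
    rw [hfun]
    exact Matrix.diagonal_one
  rw [hdiag, map_one]
end

section
/- Let {U₁, …, U_m} be a finite unitary group with twirling map 𝒢, and let ρ₁, ρ₂ be positive semi-definite matrices with 𝒢(ρ₁) = ρ₁. Then there exist probabilities {pₖ} with Σₖ pₖ Uₖ† ρ₂ Uₖ = ρ₁ if and only if 𝒢(ρ₂) = ρ₁. -/
open scoped Matrix ComplexOrder

/-- The twirling map `𝒢(σ) = (1/m) Σₖ Uₖ† σ Uₖ` associated to a family of matrices. -/
noncomputable def twirl {d m : ℕ} (U : Fin m → Matrix (Fin d) (Fin d) ℂ)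
    (σ : Matrix (Fin d) (Fin d) ℂ) : Matrix (Fin d) (Fin d) ℂ :=
  ((m : ℂ))⁻¹ • ∑ k, (U k)ᴴ * σ * U k

lemma twirl_conj {d m : ℕ} (U : Fin m → Matrix (Fin d) (Fin d) ℂ)
    (hinj : Function.Injective U)
    (hunit : ∀ k, U k ∈ Matrix.unitaryGroup (Fin d) ℂ)
    (hmul : ∀ k l, ∃ j, U k * U l = U j)
    (σ : Matrix (Fin d) (Fin d) ℂ) (k : Fin m) :
    twirl U ((U k)ᴴ * σ * U k) = twirl U σ := by
  classical
  set φ : Fin m → Fin m := fun j => Classical.choose (hmul k j) with hφ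
  have hspec : ∀ j, U k * U j = U (φ j) := fun j => Classical.choose_spec (hmul k j)
  have hφinj : Function.Injective φ := by
    intro a b hab
    apply hinj
    have : U k * U a = U k * U b := by rw [hspec a, hab, ← hspec b]
    have hk : (U k)ᴴ * U k = 1 := by
      simpa [Matrix.star_eq_conjTranspose] using Matrix.mem_unitaryGroup_iff'.mp (hunit k)
    calc U a = ((U k)ᴴ * U k) * U a := by rw [hk, one_mul]
      _ = (U k)ᴴ * (U k * U a) := by rw [mul_assoc]
      _ = (U k)ᴴ * (U k * U b) := by rw [this]
      _ = ((U k)ᴴ * U k) * U b := by rw [mul_assoc]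
      _ = U b := by rw [hk, one_mul]
  have hφbij : Function.Bijective φ := Finite.injective_iff_bijective.mp hφinj
  unfold twirl
  congr 1
  have : ∀ j, (U j)ᴴ * ((U k)ᴴ * σ * U k) * U j = (U (φ j))ᴴ * σ * U (φ j) := by
    intro j
    rw [← hspec j, Matrix.conjTranspose_mul]
    noncomm_ring
  simp_rw [this]
  exact Fintype.sum_bijective φ hφbij _ _ (fun j => rfl)

/-- For a finite unitary group `{U₁, …, U_m}` with twirling map `𝒢`, and positive
semi-definite `ρ₁`, `ρ₂` with `𝒢(ρ₁) = ρ₁`: there exist probabilities `pₖ` with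
`Σₖ pₖ Uₖ† ρ₂ Uₖ = ρ₁` iff `𝒢(ρ₂) = ρ₁`. -/
theorem mixture_exists_iff_twirl_eq {d m : ℕ} (hm : 0 < m)
    (U : Fin m → Matrix (Fin d) (Fin d) ℂ)
    (hinj : Function.Injective U)
    (hunit : ∀ k, U k ∈ Matrix.unitaryGroup (Fin d) ℂ)
    (hone : ∃ k, U k = 1)
    (hmul : ∀ k l, ∃ j, U k * U l = U j)
    (hinv : ∀ k, ∃ j, (U k)ᴴ = U j)
    (ρ₁ ρ₂ : Matrix (Fin d) (Fin d) ℂ)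
    (hρ₁ : ρ₁.PosSemidef) (hρ₂ : ρ₂.PosSemidef)
    (hfix : twirl U ρ₁ = ρ₁) :
    (∃ p : Fin m → ℝ, (∀ k, 0 ≤ p k) ∧ ∑ k, p k = 1 ∧
        ∑ k, (p k : ℂ) • ((U k)ᴴ * ρ₂ * U k) = ρ₁)
      ↔ twirl U ρ₂ = ρ₁ := by
  have hmC : (m : ℂ) ≠ 0 := Nat.cast_ne_zero.mpr hm.ne'
  constructor
  · rintro ⟨p, hp0, hp1, hpsum⟩
    have h1 : twirl U ρ₁ = ρ₁ := hfix
    have h2 : twirl U (∑ k, (p k : ℂ) • ((U k)ᴴ * ρ₂ * U k))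
        = ∑ k, (p k : ℂ) • twirl U ((U k)ᴴ * ρ₂ * U k) := by
      unfold twirl
      simp only [Matrix.mul_sum, Matrix.sum_mul, Matrix.mul_smul, Matrix.smul_mul,
        Finset.smul_sum]
      rw [Finset.sum_comm]
      refine Finset.sum_congr rfl fun k _ => ?_
      refine Finset.sum_congr rfl fun j _ => ?_
      rw [smul_comm]
    rw [hpsum] at h2
    rw [h1] at h2
    have h3 : ∀ k, twirl U ((U k)ᴴ * ρ₂ * U k) = twirl U ρ₂ :=
      twirl_conj U hinj hunit hmul ρ₂
    simp_rw [h3, ← Finset.sum_smul] at h2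
    have hp1C : (∑ k, (p k : ℂ)) = 1 := by rw [← Complex.ofReal_sum, hp1, Complex.ofReal_one]
    rw [hp1C, one_smul] at h2
    exact h2.symm
  · intro h
    refine ⟨fun _ => (m : ℝ)⁻¹, fun _ => by positivity, ?_, ?_⟩
    · simp [Finset.sum_const]
      field_simp
    · have : ∑ k, ((((m:ℝ))⁻¹ : ℝ) : ℂ) • ((U k)ᴴ * ρ₂ * U k)
          = twirl U ρ₂ := by
        unfold twirl
        rw [Finset.smul_sum]
        push_cast
        rfl
      rw [this, h]
end

section
/- Let ρ₁ and ρ₂ be positive definite d × d matrices and {U₁, …, U_m} unitary matrices. If there exist probabilities {pₖ} with Σₖ pₖ Uₖ† ρ₂ Uₖ = ρ₁, then the eigenvalues of ρ₁ are majorized by the eigenvalues of ρ₂. -/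
open scoped Matrix ComplexOrder

/-- For any `f : Fin d → ℝ` and `j ≤ d` there is a set of `j` indices on which `f` is
pointwise at least as large as outside. -/
lemma exists_top_set {d : ℕ} (f : Fin d → ℝ) :
    ∀ j, j ≤ d → ∃ s : Finset (Fin d), s.card = j ∧ ∀ i ∈ s, ∀ i' ∉ s, f i' ≤ f i := by
  intro j
  induction j with
  | zero => exact fun _ => ⟨∅, rfl, by simp⟩
  | succ j ih =>
    intro hj
    obtain ⟨s, hcard, hs⟩ := ih (Nat.le_of_succ_le hj)
    have hlt : s.card < (Finset.univ : Finset (Fin d)).card := by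
      simpa [hcard] using hj
    have hne : (sᶜ : Finset (Fin d)).Nonempty := by
      rw [← Finset.card_compl_lt_iff_nonempty (s := sᶜ)]
      simpa using hlt
    obtain ⟨i₀, hi₀mem, hi₀max⟩ := Finset.exists_max_image sᶜ f hne
    have hi₀ : i₀ ∉ s := by simpa using hi₀mem
    refine ⟨insert i₀ s, by rw [Finset.card_insert_of_notMem hi₀, hcard], ?_⟩
    intro i hi i' hi'
    have hi's : i' ∉ s := fun h => hi' (Finset.mem_insert_of_mem h)
    rcases Finset.mem_insert.mp hi with rfl | his
    · exact hi₀max i' (by simpa using hi's)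
    · exact hs i his i' hi's

/-- A weighted sum with substochastic weights summing to `s.card` is at most the plain
sum over a "top" set `s`. -/
lemma weighted_sum_le {d : ℕ} (f q : Fin d → ℝ) (s : Finset (Fin d))
    (hs : ∀ i ∈ s, ∀ i' ∉ s, f i' ≤ f i)
    (hq0 : ∀ i, 0 ≤ q i) (hq1 : ∀ i, q i ≤ 1)
    (hqsum : ∑ i, q i = s.card) :
    ∑ i, f i * q i ≤ ∑ i ∈ s, f i := by
  rcases s.eq_empty_or_nonempty with rfl | hne
  · have h0 : ∑ i, q i = 0 := by simpa using hqsum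
    have : ∀ i ∈ Finset.univ, q i = 0 :=
      (Finset.sum_eq_zero_iff_of_nonneg (fun i _ => hq0 i)).mp h0
    simp only [Finset.sum_empty]
    rw [Finset.sum_congr rfl (fun i hi => by rw [this i hi, mul_zero])]
    simp
  · set c : ℝ := s.inf' hne f with hc
    have hcle : ∀ i ∈ s, c ≤ f i := fun i hi => Finset.inf'_le f hi
    have hlec : ∀ i ∉ s, f i ≤ c := by
      intro i hi
      obtain ⟨i₀, hi₀, hi₀e⟩ := Finset.exists_mem_eq_inf' hne f
      rw [hc, hi₀e]
      exact hs i₀ hi₀ i hi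
    have key : ∑ i, f i * q i ≤ ∑ i ∈ s, (f i + c * (q i - 1)) + ∑ i ∈ sᶜ, c * q i := by
      rw [← Finset.sum_add_sum_compl s (fun i => f i * q i)]
      refine add_le_add (Finset.sum_le_sum ?_) (Finset.sum_le_sum ?_)
      · intro i hi
        have h1 : f i * q i = f i + f i * (q i - 1) := by ring
        rw [h1]
        have : f i * (q i - 1) ≤ c * (q i - 1) := by
          apply mul_le_mul_of_nonpos_right (hcle i hi) (by linarith [hq1 i])
        linarith
      · intro i hi
        have hi' : i ∉ s := by simpa using hi
        exact mul_le_mul_of_nonneg_right (hlec i hi') (hq0 i)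
    have hzero : ∑ i ∈ s, (c * (q i - 1)) + ∑ i ∈ sᶜ, c * q i = 0 := by
      rw [← Finset.mul_sum, ← Finset.mul_sum, ← mul_add]
      have : ∑ i ∈ s, (q i - 1) + ∑ i ∈ sᶜ, q i = 0 := by
        rw [Finset.sum_sub_distrib]
        have := Finset.sum_add_sum_compl s q
        simp only [Finset.sum_const, nsmul_eq_mul, mul_one] at *
        linarith [hqsum]
      rw [this, mul_zero]
    calc ∑ i, f i * q i ≤ ∑ i ∈ s, (f i + c * (q i - 1)) + ∑ i ∈ sᶜ, c * q i := key
      _ = ∑ i ∈ s, f i + (∑ i ∈ s, (c * (q i - 1)) + ∑ i ∈ sᶜ, c * q i) := by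
          rw [Finset.sum_add_distrib]; ring
      _ = ∑ i ∈ s, f i := by rw [hzero, add_zero]

/-- If `ρ₁ = Σₖ pₖ Uₖ† ρ₂ Uₖ` for probabilities `pₖ` and unitaries `Uₖ`, then the
eigenvalues of `ρ₁` are majorized by the eigenvalues of `ρ₂`: the sum of any `j` eigenvalues of
`ρ₁` is at most the sum of some `j` eigenvalues of `ρ₂`, and the total sums agree. -/
theorem mixture_implies_majorization {d m : ℕ}
    (ρ₁ ρ₂ : Matrix (Fin d) (Fin d) ℂ)
    (hρ₁ : ρ₁.PosDef) (hρ₂ : ρ₂.PosDef)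
    (U : Fin m → Matrix (Fin d) (Fin d) ℂ)
    (hU : ∀ k, U k ∈ Matrix.unitaryGroup (Fin d) ℂ)
    (p : Fin m → ℝ) (hp : ∀ k, 0 ≤ p k) (hp1 : ∑ k, p k = 1)
    (hmix : ∑ k, (p k : ℂ) • ((U k)ᴴ * ρ₂ * U k) = ρ₁) :
    (∀ t : Finset (Fin d), ∃ s : Finset (Fin d), s.card = t.card ∧
        ∑ i ∈ t, hρ₁.1.eigenvalues i ≤ ∑ i ∈ s, hρ₂.1.eigenvalues i) ∧
    ∑ i, hρ₁.1.eigenvalues i = ∑ i, hρ₂.1.eigenvalues i := by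
  classical
  set H1 := hρ₁.1 with hH1
  set H2 := hρ₂.1 with hH2
  set lam₁ := H1.eigenvalues with hl1
  set lam₂ := H2.eigenvalues with hl2
  set V : Matrix (Fin d) (Fin d) ℂ := (H1.eigenvectorUnitary : Matrix (Fin d) (Fin d) ℂ)
  set W : Matrix (Fin d) (Fin d) ℂ := (H2.eigenvectorUnitary : Matrix (Fin d) (Fin d) ℂ)
  -- the unitaries B k = W† U k V
  set Bu : Fin m → Matrix.unitaryGroup (Fin d) ℂ :=
    fun k => (star H2.eigenvectorUnitary) * ⟨U k, hU k⟩ * H1.eigenvectorUnitary with hBu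
  set B : Fin m → Matrix (Fin d) (Fin d) ℂ := fun k => (Bu k : Matrix (Fin d) (Fin d) ℂ) with hB
  have hBdef : ∀ k, B k = Wᴴ * U k * V := by
    intro k; simp [hB, hBu, V, W, Matrix.unitaryGroup, Matrix.star_eq_conjTranspose]
  -- squared moduli of entries of B k
  set nn : Fin m → Fin d → Fin d → ℝ := fun k l i => Complex.normSq (B k l i) with hnn
  have hnn0 : ∀ k l i, 0 ≤ nn k l i := fun k l i => Complex.normSq_nonneg _
  -- column sums of nn are 1
  have hcol : ∀ k i, ∑ l, nn k l i = 1 := by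
    intro k i
    have h := (Matrix.mem_unitaryGroup_iff'.mp (Bu k).2)
    have h2 := congrArg (fun M => M i i) h
    simp only [Matrix.mul_apply, Matrix.one_apply_eq, Matrix.star_apply] at h2
    have : ((∑ l, nn k l i : ℝ) : ℂ) = 1 := by
      push_cast
      rw [← h2]
      refine Finset.sum_congr rfl fun l _ => ?_
      simp [hnn, Complex.normSq_eq_conj_mul_self, Matrix.star_apply]
      rfl
    exact_mod_cast this
  -- row sums of nn are 1
  have hrow : ∀ k l, ∑ i, nn k l i = 1 := by
    intro k l
    have h := (Matrix.mem_unitaryGroup_iff.mp (Bu k).2)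
    have h2 := congrArg (fun M => M l l) h
    simp only [Matrix.mul_apply, Matrix.one_apply_eq, Matrix.star_apply] at h2
    have : ((∑ i, nn k l i : ℝ) : ℂ) = 1 := by
      push_cast
      rw [← h2]
      refine Finset.sum_congr rfl fun i _ => ?_
      simp [hnn, Complex.normSq_eq_conj_mul_self, Matrix.star_apply]
      ring
    exact_mod_cast this
  -- spectral decompositions
  have hd1 : Vᴴ * ρ₁ * V = Matrix.diagonal (fun i => (lam₁ i : ℂ)) := by
    have := H1.conjStarAlgAut_star_eigenvectorUnitary
    simpa [V, Matrix.star_eq_conjTranspose, Function.comp_def] using this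
  have hd2 : ρ₂ = W * Matrix.diagonal (fun i => (lam₂ i : ℂ)) * Wᴴ := by
    have := H2.spectral_theorem
    simpa [W, Matrix.star_eq_conjTranspose, Function.comp_def] using this
  -- the key entrywise identity
  have hkey : ∀ i, lam₁ i = ∑ k, p k * ∑ l, lam₂ l * nn k l i := by
    intro i
    have hmix' : Vᴴ * (∑ k, (p k : ℂ) • ((U k)ᴴ * ρ₂ * U k)) * V
        = Matrix.diagonal (fun i => (lam₁ i : ℂ)) := by rw [hmix, hd1]
    have hexp : Vᴴ * (∑ k, (p k : ℂ) • ((U k)ᴴ * ρ₂ * U k)) * V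
        = ∑ k, (p k : ℂ) • ((B k)ᴴ * Matrix.diagonal (fun i => (lam₂ i : ℂ)) * B k) := by
      rw [Matrix.mul_sum, Matrix.sum_mul]
      refine Finset.sum_congr rfl fun k _ => ?_
      rw [Matrix.mul_smul, Matrix.smul_mul]
      congr 1
      rw [hd2, hBdef]
      simp only [Matrix.conjTranspose_mul, Matrix.conjTranspose_conjTranspose]
      noncomm_ring
    have hii := congrArg (fun M => M i i) (hexp ▸ hmix')
    simp only [Matrix.sum_apply, Matrix.smul_apply, Matrix.diagonal_apply_eq,
      smul_eq_mul] at hii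
    have hentry : ∀ k, ((B k)ᴴ * Matrix.diagonal (fun i => (lam₂ i : ℂ)) * B k) i i
        = ((∑ l, lam₂ l * nn k l i : ℝ) : ℂ) := by
      intro k
      rw [Matrix.mul_apply]
      simp only [Matrix.mul_diagonal, Matrix.conjTranspose_apply, Matrix.star_apply]
      push_cast
      refine Finset.sum_congr rfl fun l _ => ?_
      simp only [hnn]
      rw [Complex.normSq_eq_conj_mul_self, Complex.star_def]
      ring
    have : ((lam₁ i : ℝ) : ℂ) = ((∑ k, p k * ∑ l, lam₂ l * nn k l i : ℝ) : ℂ) := by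
      rw [← hii]
      push_cast
      refine Finset.sum_congr rfl fun k _ => ?_
      rw [hentry k]
      push_cast
      ring
    exact_mod_cast this
  -- the weights
  have hmain : ∀ t : Finset (Fin d),
      ∑ i ∈ t, lam₁ i = ∑ l, lam₂ l * (∑ k, p k * ∑ i ∈ t, nn k l i) := by
    intro t
    have lhs : ∑ i ∈ t, lam₁ i = ∑ i ∈ t, ∑ k, ∑ l, p k * (lam₂ l * nn k l i) := by
      refine Finset.sum_congr rfl fun i _ => ?_
      rw [hkey i]
      exact Finset.sum_congr rfl fun k _ => by rw [Finset.mul_sum]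
    rw [lhs]
    simp_rw [Finset.mul_sum]
    conv_lhs => rw [Finset.sum_comm]
    conv_rhs => rw [Finset.sum_comm]
    refine Finset.sum_congr rfl fun k _ => ?_
    rw [Finset.sum_comm]
    exact Finset.sum_congr rfl fun l _ => Finset.sum_congr rfl fun i _ => by ring
  constructor
  · intro t
    set q : Fin d → ℝ := fun l => ∑ k, p k * ∑ i ∈ t, nn k l i with hq
    have hq0 : ∀ l, 0 ≤ q l := fun l =>
      Finset.sum_nonneg fun k _ => mul_nonneg (hp k)
        (Finset.sum_nonneg fun i _ => hnn0 k l i)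
    have hq1 : ∀ l, q l ≤ 1 := by
      intro l
      have : ∀ k, p k * ∑ i ∈ t, nn k l i ≤ p k * 1 := by
        intro k
        refine mul_le_mul_of_nonneg_left ?_ (hp k)
        rw [← hrow k l]
        exact Finset.sum_le_sum_of_subset_of_nonneg (Finset.subset_univ t)
          (fun i _ _ => hnn0 k l i)
      calc q l ≤ ∑ k, p k * 1 := Finset.sum_le_sum fun k _ => this k
        _ = 1 := by simp [hp1]
    have hqsum : ∑ l, q l = t.card := by
      calc ∑ l, q l = ∑ k, ∑ l, p k * ∑ i ∈ t, nn k l i := Finset.sum_comm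
        _ = ∑ k, p k * ∑ i ∈ t, ∑ l, nn k l i := by
            refine Finset.sum_congr rfl fun k _ => ?_
            rw [← Finset.mul_sum, Finset.sum_comm]
        _ = ∑ k, p k * t.card := by
            refine Finset.sum_congr rfl fun k _ => ?_
            congr 1
            rw [Finset.sum_congr rfl fun i _ => hcol k i]
            simp
        _ = t.card := by rw [← Finset.sum_mul, hp1, one_mul]
    have hcard_le : t.card ≤ d := by simpa using Finset.card_le_univ t
    obtain ⟨s, hscard, hsprop⟩ := exists_top_set lam₂ t.card hcard_le
    refine ⟨s, hscard, ?_⟩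
    rw [hmain t]
    have := weighted_sum_le lam₂ q s hsprop hq0 hq1 (by rw [hqsum, hscard])
    exact this
  · have h := hmain Finset.univ
    have hone : ∀ l, (∑ k, p k * ∑ i, nn k l i) = 1 := by
      intro l
      rw [Finset.sum_congr rfl fun k _ => by rw [hrow k l, mul_one]]
      exact hp1
    rw [h, Finset.sum_congr rfl fun l _ => by rw [hone l, mul_one]]
end

section
/- Consider the three-qubit GHZ state φ = (|000⟩ + |111⟩)/√2. The stabilizer of φ inside SL(2,ℂ)^{⊗3} is exactly the set {t₁ ⊗ t₂ ⊗ t₃ : tⱼ = diag(sⱼ, sⱼ⁻¹), s₁s₂s₃ = 1}. -/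
open scoped Matrix Kronecker

/-- The three-qubit GHZ state `(|000⟩ + |111⟩)/√2`. -/
noncomputable def ghz : Fin 2 × Fin 2 × Fin 2 → ℂ := fun x =>
  if x = (0, 0, 0) ∨ x = (1, 1, 1) then ((Real.sqrt 2 : ℝ) : ℂ)⁻¹ else 0

/-- The stabilizer of the GHZ state inside `SL(2,ℂ)⊗SL(2,ℂ)⊗SL(2,ℂ)` is exactly
`{t₁ ⊗ t₂ ⊗ t₃ : tⱼ = diag(sⱼ, sⱼ⁻¹), s₁s₂s₃ = 1}`. -/
theorem ghz_stabilizer (t₁ t₂ t₃ : Matrix (Fin 2) (Fin 2) ℂ)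
    (h₁ : t₁.det = 1) (h₂ : t₂.det = 1) (h₃ : t₃.det = 1) :
    (t₁ ⊗ₖ (t₂ ⊗ₖ t₃)).mulVec ghz = ghz ↔
      ∃ s₁ s₂ s₃ : ℂ, s₁ * s₂ * s₃ = 1 ∧
        t₁ = !![s₁, 0; 0, s₁⁻¹] ∧ t₂ = !![s₂, 0; 0, s₂⁻¹] ∧ t₃ = !![s₃, 0; 0, s₃⁻¹] := by
  have hne : (((Real.sqrt 2 : ℝ) : ℂ))⁻¹ ≠ 0 := by
    simp [Real.sqrt_eq_zero']
  rw [Matrix.det_fin_two] at h₁ h₂ h₃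
  set a := t₁ 0 0 with ha; set b := t₁ 0 1 with hb; set c := t₁ 1 0 with hc
  set d := t₁ 1 1 with hd
  set e := t₂ 0 0 with he; set f := t₂ 0 1 with hf; set g := t₂ 1 0 with hg
  set h := t₂ 1 1 with hh
  set p := t₃ 0 0 with hp; set q := t₃ 0 1 with hq; set r := t₃ 1 0 with hr
  set u := t₃ 1 1 with hu
  constructor
  · intro H
    have key : ∀ x : Fin 2 × Fin 2 × Fin 2,
        t₁ x.1 0 * (t₂ x.2.1 0 * t₃ x.2.2 0) * ((Real.sqrt 2 : ℝ) : ℂ)⁻¹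
          + t₁ x.1 1 * (t₂ x.2.1 1 * t₃ x.2.2 1) * ((Real.sqrt 2 : ℝ) : ℂ)⁻¹ = ghz x := by
      intro x
      have := congrFun H x
      simpa [Matrix.mulVec, dotProduct, ghz, Fintype.sum_prod_type, Fin.sum_univ_two,
        Matrix.kroneckerMap_apply] using this
    have mk : ∀ x : Fin 2 × Fin 2 × Fin 2, ∀ v : ℂ, ghz x = v * ((Real.sqrt 2 : ℝ) : ℂ)⁻¹ →
        t₁ x.1 0 * (t₂ x.2.1 0 * t₃ x.2.2 0) + t₁ x.1 1 * (t₂ x.2.1 1 * t₃ x.2.2 1) = v := by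
      intro x v hv
      apply mul_right_cancel₀ hne
      rw [add_mul, key x]
      exact hv
    have E000 : a * (e * p) + b * (f * q) = 1 := mk (0,0,0) 1 (by simp [ghz])
    have E001 : a * (e * r) + b * (f * u) = 0 := mk (0,0,1) 0 (by simp [ghz])
    have E010 : a * (g * p) + b * (h * q) = 0 := mk (0,1,0) 0 (by simp [ghz])
    have E011 : a * (g * r) + b * (h * u) = 0 := mk (0,1,1) 0 (by simp [ghz])
    have E100 : c * (e * p) + d * (f * q) = 0 := mk (1,0,0) 0 (by simp [ghz])
    have E101 : c * (e * r) + d * (f * u) = 0 := mk (1,0,1) 0 (by simp [ghz])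
    have E110 : c * (g * p) + d * (h * q) = 0 := mk (1,1,0) 0 (by simp [ghz])
    have E111 : c * (g * r) + d * (h * u) = 1 := mk (1,1,1) 1 (by simp [ghz])
    have hpq : p * q = 0 := by
      linear_combination (a*e*p + b*f*q) * E110 - (c*e*p + d*f*q) * E010
        - p*q*(e*h - f*g) * h₁ - p*q * h₂
    have hru : r * u = 0 := by
      linear_combination (c*g*r + d*h*u) * E001 - (c*e*r + d*f*u) * E011
        - r*u*(e*h - f*g) * h₁ - r*u * h₂
    rcases mul_eq_zero.mp hpq with hP | hQ
    · rcases mul_eq_zero.mp hru with hR | hU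
      · exfalso; rw [hP, hR] at h₃; simp at h₃
      · -- antidiagonal case: contradiction
        exfalso
        have hdz : d = 0 := by
          linear_combination b * E100 - d * E000 + e*(a*d - b*c) * hP
        have hhz : h = 0 := by
          linear_combination f * E010 - h * E000 + a*(e*h - f*g) * hP
        have hA : b * (f * q) = 1 := by linear_combination E000 - a*e*hP
        have hD : c * (g * r) = 1 := by linear_combination E111 - d*h*hU
        have hbc : b * c = -1 := by linear_combination a * hdz - h₁
        have hfg : f * g = -1 := by linear_combination e * hhz - h₂
        have hqr : q * r = -1 := by linear_combination u * hP - h₃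
        have : (1 : ℂ) = -1 := by
          linear_combination -(c*g*r) * hA - hD + f*g*q*r * hbc - q*r * hfg + hqr
        norm_num at this
    · rcases mul_eq_zero.mp hru with hR | hU
      · -- diagonal case
        have hgz : g = 0 := by
          linear_combination e * E010 - g * E000 - b*(e*h - f*g) * hQ
        have hcz : c = 0 := by
          linear_combination a * E100 - c * E000 - f*(a*d - b*c) * hQ
        have hfz : f = 0 := by
          linear_combination h * E101 - f * E111 - c*(e*h - f*g) * hR
        have hbz : b = 0 := by
          linear_combination d * E011 - b * E111 - g*(a*d - b*c) * hR
        have hprod : a * e * p = 1 := by linear_combination E000 - b*f*hQ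
        refine ⟨a, e, p, hprod, ?_, ?_, ?_⟩
        · have had : a * d = 1 := by linear_combination h₁ + c * hbz
          rw [Matrix.eta_fin_two t₁, ← ha, ← hb, ← hc, ← hd, hbz, hcz,
            inv_eq_of_mul_eq_one_right had]
        · have heh : e * h = 1 := by linear_combination h₂ + g * hfz
          rw [Matrix.eta_fin_two t₂, ← he, ← hf, ← hg, ← hh, hfz, hgz,
            inv_eq_of_mul_eq_one_right heh]
        · have hpu : p * u = 1 := by linear_combination h₃ + r * hQ
          rw [Matrix.eta_fin_two t₃, ← hp, ← hq, ← hr, ← hu, hQ, hR,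
            inv_eq_of_mul_eq_one_right hpu]
      · exfalso; rw [hQ, hU] at h₃; simp at h₃
  · rintro ⟨s₁, s₂, s₃, hs, rfl, rfl, rfl⟩
    have h1 : s₁ ≠ 0 := fun h0 => by simp [h0] at hs
    have h2 : s₂ ≠ 0 := fun h0 => by simp [h0] at hs
    have h3 : s₃ ≠ 0 := fun h0 => by simp [h0] at hs
    have hs' : s₁⁻¹ * (s₂⁻¹ * s₃⁻¹) = 1 := by
      field_simp
      linear_combination -hs
    funext x
    obtain ⟨i, j, k⟩ := x
    fin_cases i <;> fin_cases j <;> fin_cases k <;>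
      simp [Matrix.mulVec, dotProduct, ghz, Fintype.sum_prod_type, Fin.sum_univ_two,
        Matrix.kroneckerMap_apply]
    · linear_combination hs
    · exact hs'
end
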